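/- Let R > 0, let V : ℝ³ → ℝ be integrable, spherically symmetric (V(x) depends only on |x|), and supported in the closed ball of radius R centered at the origin. Let f : ℝ³ → ℝ be twice continuously differentiable, spherically symmetric, bounded, satisfy the zero-energy scattering equation −Δf(x) + (1/2)V(x)f(x) = 0 for all x ∈ ℝ³, and satisfy f(x) → 1 as |x| → ∞. Then for every x with |x| > R one has f(x) = 1 − a₀/|x|, where a₀ := (8π)⁻¹ ∫ f(x)V(x) dx is the scattering length of V. -/

import Mathlib

/-!
For radial `f x = g ‖x‖` the Laplacian is `g'' + 2 g' / r = r⁻² (r² g')'`, so integrating the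
scattering equation against `r² dr` over `(0, r]` shows that the flux `r² g'(r)` equals
`∫₀^∞ s² (V g / 2) ds`, which is `a₀` by polar coordinates, once `r > R` has left the support
of `V`. Hence `g' = a₀ / r²` outside the ball, and `g → 1` at infinity forces `g = 1 - a₀ / r`.
-/

open MeasureTheory Filter Real

/-- The Laplacian of a function on ℝ³ (as `EuclideanSpace ℝ (Fin 3)`):
`Δf = ∑ i, ∂²f/∂xᵢ²`. -/
noncomputable def laplacian (f : EuclideanSpace ℝ (Fin 3) → ℝ)
    (x : EuclideanSpace ℝ (Fin 3)) : ℝ :=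
  ∑ i : Fin 3,
    fderiv ℝ (fun y => fderiv ℝ f y (EuclideanSpace.single i 1)) x
      (EuclideanSpace.single i 1)

open Set Topology InnerProductSpace

section RadialCalculus

variable {F : Type*} [NormedAddCommGroup F] [InnerProductSpace ℝ F] {x : F} {g : ℝ → ℝ}

theorem hasFDerivAt_norm (hx : x ≠ 0) :
    HasFDerivAt (fun y : F => ‖y‖) (‖x‖⁻¹ • innerSL ℝ x) x := by
  have hx' : 0 < ‖x‖ := norm_pos_iff.2 hx
  have h := (hasDerivAt_sqrt (pow_pos hx' 2).ne').comp_hasFDerivAt x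
    (hasStrictFDerivAt_norm_sq x).hasFDerivAt
  simp only [Function.comp_def, sqrt_sq (norm_nonneg _)] at h
  refine h.congr_fderiv ?_
  ext v
  simp only [smul_apply, coe_innerSL_apply, nsmul_eq_mul, Nat.cast_ofNat, smul_eq_mul]
  field_simp

theorem HasDerivAt.hasFDerivAt_comp_norm {g' : ℝ} (hg : HasDerivAt g g' ‖x‖) (hx : x ≠ 0) :
    HasFDerivAt (fun y => g ‖y‖) ((g' * ‖x‖⁻¹) • innerSL ℝ x) x := by
  rw [← smul_smul]
  exact hg.comp_hasFDerivAt x (hasFDerivAt_norm hx)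

theorem fderiv_comp_norm_apply (hg : DifferentiableAt ℝ g ‖x‖) (hx : x ≠ 0) (v : F) :
    fderiv ℝ (fun y => g ‖y‖) x v = deriv g ‖x‖ / ‖x‖ * ⟪x, v⟫_ℝ := by
  simp [(hg.hasDerivAt.hasFDerivAt_comp_norm hx).fderiv, div_eq_mul_inv]

theorem fderiv_fderiv_comp_norm_apply (hg : ContDiff ℝ 2 g) (hx : x ≠ 0) (v : F) :
    fderiv ℝ (fun y => fderiv ℝ (fun z => g ‖z‖) y v) x v =
      deriv (deriv g) ‖x‖ * ⟪x, v⟫_ℝ ^ 2 / ‖x‖ ^ 2 +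
        deriv g ‖x‖ * (‖v‖ ^ 2 / ‖x‖ - ⟪x, v⟫_ℝ ^ 2 / ‖x‖ ^ 3) := by
  have hx' : 0 < ‖x‖ := norm_pos_iff.2 hx
  have hφ : (fun y => fderiv ℝ (fun z => g ‖z‖) y v) =ᶠ[𝓝 x]
      fun y => deriv g ‖y‖ / ‖y‖ * innerSL ℝ v y := by
    filter_upwards [isOpen_compl_singleton.mem_nhds hx] with y hy
    simpa [real_inner_comm] using fderiv_comp_norm_apply (hg.differentiable two_ne_zero _) hy v
  have hk : HasDerivAt (fun r => deriv g r / r)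
      ((deriv (deriv g) ‖x‖ * ‖x‖ - deriv g ‖x‖ * 1) / ‖x‖ ^ 2) ‖x‖ :=
    ((hg.iterate_deriv' 1 1).differentiable one_ne_zero _).hasDerivAt.div (hasDerivAt_id _) hx'.ne'
  have hd : HasFDerivAt (fun y => deriv g ‖y‖ / ‖y‖ * innerSL ℝ v y) _ x :=
    (hk.hasFDerivAt_comp_norm hx).mul (innerSL ℝ v).hasFDerivAt
  rw [hφ.fderiv_eq, hd.fderiv]
  simp only [add_apply, smul_apply, coe_innerSL_apply, real_inner_comm x v,
    real_inner_self_eq_norm_sq, smul_eq_mul]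
  field_simp
  ring

theorem laplacian_comp_norm (hg : ContDiff ℝ 2 g) {x : EuclideanSpace ℝ (Fin 3)} (hx : x ≠ 0) :
    laplacian (fun y => g ‖y‖) x = deriv (deriv g) ‖x‖ + 2 * deriv g ‖x‖ / ‖x‖ := by
  have hx' : 0 < ‖x‖ := norm_pos_iff.2 hx
  have hnorm : ‖x‖ ^ 2 = x 0 ^ 2 + x 1 ^ 2 + x 2 ^ 2 := by
    simp [EuclideanSpace.norm_sq_eq, Fin.sum_univ_three]
  simp only [laplacian, fderiv_fderiv_comp_norm_apply hg hx, EuclideanSpace.inner_single_right,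
    PiLp.norm_single, norm_one, conj_trivial, Fin.sum_univ_three]
  field_simp
  linear_combination (deriv g ‖x‖ - deriv (deriv g) ‖x‖ * ‖x‖) * hnorm

end RadialCalculus

theorem integral_comp_norm_euclideanSpace_fin_three {E : Type*} [NormedAddCommGroup E]
    [NormedSpace ℝ E] (h : ℝ → E) :
    ∫ x : EuclideanSpace ℝ (Fin 3), h ‖x‖ = (4 * π) • ∫ r in Ioi (0 : ℝ), r ^ 2 • h r := by
  rw [integral_fun_norm_addHaar, finrank_euclideanSpace_fin, Measure.real,
    EuclideanSpace.volume_ball_fin_three, ← Nat.cast_smul_eq_nsmul ℝ, smul_smul]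
  congr 1
  rw [ENNReal.ofReal_one, one_pow, one_mul, ENNReal.toReal_ofReal (by positivity)]
  ring

theorem eq_norm_smul_of_norm_eq {E β : Type*} [SeminormedAddCommGroup E] [NormedSpace ℝ E]
    {f : E → β} (hf : ∀ x y, ‖x‖ = ‖y‖ → f x = f y) {e : E} (he : ‖e‖ = 1) (x : E) :
    f x = f (‖x‖ • e) :=
  hf _ _ (by simp [norm_smul, he])

theorem tendsto_smul_const_atTop_cocompact {E : Type*} [NormedAddCommGroup E] [NormedSpace ℝ E]
    [ProperSpace E] {e : E} (he : e ≠ 0) :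
    Tendsto (fun r : ℝ => r • e) atTop (cocompact E) := by
  rw [← Metric.cobounded_eq_cocompact, ← tendsto_norm_atTop_iff_cobounded]
  simp only [norm_smul, norm_eq_abs]
  exact tendsto_abs_atTop_atTop.atTop_mul_const (norm_pos_iff.2 he)

theorem sq_mul_deriv_eq_integral_of_radial_eq {g q : ℝ → ℝ} {R r : ℝ} (hg : ContDiff ℝ 2 g)
    (hR : 0 ≤ R) (hgq : ∀ s, 0 < s → deriv (deriv g) s + 2 * deriv g s / s = q s)
    (hq : ∀ s, R < s → q s = 0) (hr : R < r) :
    r ^ 2 * deriv g r = ∫ s in Ioi 0, s ^ 2 * q s := by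
  have hg' : ContDiff ℝ 1 (deriv g) := hg.iterate_deriv' 1 1
  set F' : ℝ → ℝ := fun s => 2 * s * deriv g s + s ^ 2 * deriv (deriv g) s
  have hF : ∀ s, HasDerivAt (fun s => s ^ 2 * deriv g s) (F' s) s := fun s => by
    refine ((hasDerivAt_pow 2 s).mul (hg'.differentiable one_ne_zero s).hasDerivAt).congr_deriv ?_
    simp only [F']
    ring
  have hF'_cont : Continuous F' := by
    have := hg.continuous_deriv one_le_two
    have := hg'.continuous_deriv le_rfl
    fun_prop
  have hF'q : EqOn F' (fun s => s ^ 2 * q s) (Ioc 0 r) := fun s hs => by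
    simp only [F', ← hgq s hs.1]
    field_simp [hs.1.ne']
    ring
  have hftc := intervalIntegral.integral_eq_sub_of_hasDerivAt (fun s _ => hF s)
    (hF'_cont.intervalIntegrable 0 r)
  rw [intervalIntegral.integral_of_le (hR.trans hr.le),
    setIntegral_congr_fun measurableSet_Ioc hF'q] at hftc
  have hvanish : ∀ s ∈ Ioi 0 \ Ioc 0 r, s ^ 2 * q s = 0 := fun s hs => by
    simp only [Set.mem_sdiff, mem_Ioi, mem_Ioc, not_and, not_le] at hs
    rw [hq s (hr.trans (hs.2 hs.1)), mul_zero]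
  rw [setIntegral_eq_of_subset_of_forall_sdiff_eq_zero measurableSet_Ioi Ioc_subset_Ioi_self
    hvanish, hftc]
  simp only [ne_eq, OfNat.ofNat_ne_zero, not_false_eq_true, zero_pow, zero_mul, sub_zero]

theorem eq_sub_div_of_hasDerivAt_of_tendsto {g : ℝ → ℝ} {a A L : ℝ} (ha : 0 ≤ a)
    (hg : ∀ r, a < r → HasDerivAt g (A / r ^ 2) r) (hlim : Tendsto g atTop (𝓝 L))
    {r : ℝ} (hr : a < r) : g r = L - A / r := by
  set h : ℝ → ℝ := fun s => g s + A * s⁻¹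
  have hh : ∀ s, a < s → HasDerivAt h 0 s := by
    intro s hs
    have hs0 : s ≠ 0 := (ha.trans_lt hs).ne'
    refine ((hg s hs).add ((hasDerivAt_inv hs0).const_mul A)).congr_deriv ?_
    ring
  have hconst : ∀ s, a < s → h s = h r := fun s hs =>
    isOpen_Ioi.is_const_of_deriv_eq_zero isPreconnected_Ioi
      (fun t ht => (hh t ht).differentiableAt.differentiableWithinAt)
      (fun t ht => (hh t ht).deriv) hs hr
  have hlim' : Tendsto h atTop (𝓝 (L + A * 0)) :=
    hlim.add (tendsto_inv_atTop_zero.const_mul A)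
  have : h r = L := by
    refine tendsto_nhds_unique (tendsto_const_nhds.congr' ?_) (by simpa using hlim')
    filter_upwards [eventually_gt_atTop a] with s hs using (hconst s hs).symm
  simp only [h] at this
  rw [div_eq_mul_inv]
  linarith

theorem scattering_solution_outside_support_general
    (R : ℝ) (hR : 0 < R)
    (V : EuclideanSpace ℝ (Fin 3) → ℝ)
    (hV_sym : ∀ x y : EuclideanSpace ℝ (Fin 3), ‖x‖ = ‖y‖ → V x = V y)
    (hV_supp : ∀ x : EuclideanSpace ℝ (Fin 3), R < ‖x‖ → V x = 0)
    (f : EuclideanSpace ℝ (Fin 3) → ℝ)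
    (hf_smooth : ContDiff ℝ 2 f)
    (hf_sym : ∀ x y : EuclideanSpace ℝ (Fin 3), ‖x‖ = ‖y‖ → f x = f y)
    (hscat : ∀ x, -laplacian f x + (1 / 2) * V x * f x = 0)
    (hf_infty : Tendsto f (cocompact (EuclideanSpace ℝ (Fin 3))) (nhds 1))
    (a₀ : ℝ) (ha₀ : a₀ = (8 * π)⁻¹ * ∫ x, f x * V x) :
    ∀ x : EuclideanSpace ℝ (Fin 3), R < ‖x‖ → f x = 1 - a₀ / ‖x‖ := by
  set e : EuclideanSpace ℝ (Fin 3) := EuclideanSpace.single 0 1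
  have he : ‖e‖ = 1 := by simp [e]
  have hnorm_smul : ∀ r : ℝ, 0 ≤ r → ‖r • e‖ = r := fun r hr => by simp [norm_smul, he, hr]
  set g : ℝ → ℝ := fun r => f (r • e)
  set W : ℝ → ℝ := fun r => V (r • e)
  have hfg : f = fun x => g ‖x‖ := funext (eq_norm_smul_of_norm_eq hf_sym he)
  have hVW : V = fun x => W ‖x‖ := funext (eq_norm_smul_of_norm_eq hV_sym he)
  have hg : ContDiff ℝ 2 g := hf_smooth.comp (contDiff_id.smul contDiff_const)
  have hradial : ∀ r, 0 < r → deriv (deriv g) r + 2 * deriv g r / r = 1 / 2 * W r * g r := by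
    intro r hr
    have hre := hnorm_smul r hr.le
    have hscat_r := hscat (r • e)
    have hre0 : r • e ≠ 0 := norm_pos_iff.1 (by rwa [hre])
    rw [hfg, laplacian_comp_norm hg hre0] at hscat_r
    simp only [hre] at hscat_r
    linarith
  have ha₀' : a₀ = ∫ s in Ioi 0, s ^ 2 * (1 / 2 * W s * g s) := by
    calc a₀ = (8 * π)⁻¹ * (4 * π * ∫ s in Ioi 0, s ^ 2 * (g s * W s)) := by
          rw [ha₀, hfg, hVW]
          exact congrArg _ (integral_comp_norm_euclideanSpace_fin_three fun s => g s * W s)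
      _ = ∫ s in Ioi 0, 1 / 2 * (s ^ 2 * (g s * W s)) := by
          rw [integral_const_mul]
          field_simp
          ring
      _ = ∫ s in Ioi 0, s ^ 2 * (1 / 2 * W s * g s) := by
          congr 1
          ext s
          ring
  have hderiv : ∀ r, R < r → HasDerivAt g (a₀ / r ^ 2) r := by
    intro r hr
    have hflux := sq_mul_deriv_eq_integral_of_radial_eq hg hR.le hradial
      (fun s hs => by simp [W, hV_supp _ (by rwa [hnorm_smul s (hR.trans hs).le])]) hr
    rw [ha₀', ← hflux, mul_div_cancel_left₀ _ (pow_pos (hR.trans hr) 2).ne']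
    exact (hg.differentiable two_ne_zero r).hasDerivAt
  have hlim : Tendsto g atTop (𝓝 1) :=
    hf_infty.comp (tendsto_smul_const_atTop_cocompact (norm_ne_zero_iff.1 (he ▸ one_ne_zero)))
  intro x hx
  rw [hfg]
  exact eq_sub_div_of_hasDerivAt_of_tendsto hR.le hderiv hlim hx

/-- If `V` is integrable, spherically symmetric and supported in the closed ball
of radius `R`, and `f` is a bounded, spherically symmetric C² solution of the
zero-energy scattering equation `-Δf + (1/2) V f = 0` with `f(x) → 1` as
`|x| → ∞`, then outside the support of `V` one has `f(x) = 1 - a₀/|x|`, where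
`a₀ = (8π)⁻¹ ∫ f V` is the scattering length of `V`. -/
theorem scattering_solution_outside_support
    (R : ℝ) (hR : 0 < R)
    (V : EuclideanSpace ℝ (Fin 3) → ℝ)
    (hV_int : Integrable V)
    (hV_sym : ∀ x y : EuclideanSpace ℝ (Fin 3), ‖x‖ = ‖y‖ → V x = V y)
    (hV_supp : ∀ x : EuclideanSpace ℝ (Fin 3), R < ‖x‖ → V x = 0)
    (f : EuclideanSpace ℝ (Fin 3) → ℝ)
    (hf_smooth : ContDiff ℝ 2 f)
    (hf_sym : ∀ x y : EuclideanSpace ℝ (Fin 3), ‖x‖ = ‖y‖ → f x = f y)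
    (hf_bdd : ∃ M : ℝ, ∀ x, |f x| ≤ M)
    (hscat : ∀ x, -laplacian f x + (1 / 2) * V x * f x = 0)
    (hf_infty : Tendsto f (cocompact (EuclideanSpace ℝ (Fin 3))) (nhds 1))
    (a₀ : ℝ) (ha₀ : a₀ = (8 * π)⁻¹ * ∫ x, f x * V x) :
    ∀ x : EuclideanSpace ℝ (Fin 3), R < ‖x‖ → f x = 1 - a₀ / ‖x‖ :=
  scattering_solution_outside_support_general R hR V hV_sym hV_supp f hf_smooth hf_sym hscat
    hf_infty a₀ ha₀
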